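/- If two agents' positions x_i, x_j : ℝ → ℝ² are differentiable, ‖x_i(0)−x_j(0)‖² ≥ R², and at every t ≥ 0 their velocities satisfy the decentralized responsibility-weighted constraints −2(x_i−x_j)ᵀẋ_i ≤ ω_i·γ·(‖x_i−x_j‖²−R²) and −2(x_j−x_i)ᵀẋ_j ≤ ω_j·γ·(‖x_i−x_j‖²−R²) with ω_i+ω_j = 1 and γ ≥ 0, then ‖x_i(t)−x_j(t)‖ ≥ R for all t ≥ 0. -/

import Mathlib

/-!
Since `ωi + ωj = 1`, the two decentralized constraints add up to the centralized barrier
condition `ḣ ≥ -γ h` for the safety margin `h t = ‖xi t - xj t‖ ^ 2 - R ^ 2`. Under that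
condition `exp (γ t) * h t` is nondecreasing, so `h` stays nonnegative once `h 0 ≥ 0`.
-/

open Real Set

theorem nonneg_of_neg_mul_le_deriv {h h' : ℝ → ℝ} {γ : ℝ} (hh : ∀ t, HasDerivAt h (h' t) t)
    (hbarrier : ∀ t, 0 ≤ t → -(γ * h t) ≤ h' t) (h0 : 0 ≤ h 0) {t : ℝ} (ht : 0 ≤ t) :
    0 ≤ h t := by
  have hg : ∀ s, HasDerivAt (fun s ↦ exp (γ * s) * h s)
      (γ * exp (γ * s) * h s + exp (γ * s) * h' s) s := fun s ↦
    (((hasDerivAt_id' s).const_mul γ).exp.fun_mul (hh s)).congr_deriv (by ring)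
  have hmono : MonotoneOn (fun s ↦ exp (γ * s) * h s) (Ici 0) :=
    monotoneOn_of_hasDerivWithinAt_nonneg (convex_Ici 0)
      (fun s _ ↦ (hg s).continuousAt.continuousWithinAt) (fun s _ ↦ (hg s).hasDerivWithinAt)
      fun s hs ↦ by
        have := hbarrier s (interior_subset hs)
        nlinarith [exp_pos (γ * s)]
  have hle : h 0 ≤ exp (γ * t) * h t := by simpa using hmono self_mem_Ici ht ht
  exact nonneg_of_mul_nonneg_right (h0.trans hle) (exp_pos _)

theorem decentralized_cbf_safety_general
    (xi xj : ℝ → EuclideanSpace ℝ (Fin 2))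
    (hdi : Differentiable ℝ xi) (hdj : Differentiable ℝ xj)
    (R γ ωi ωj : ℝ)
    (hω : ωi + ωj = 1)
    (h0 : ‖xi 0 - xj 0‖ ^ 2 ≥ R ^ 2)
    (hci : ∀ t, 0 ≤ t →
      -2 * (inner ℝ (xi t - xj t) (deriv xi t) : ℝ) ≤
        ωi * γ * (‖xi t - xj t‖ ^ 2 - R ^ 2))
    (hcj : ∀ t, 0 ≤ t →
      -2 * (inner ℝ (xj t - xi t) (deriv xj t) : ℝ) ≤
        ωj * γ * (‖xi t - xj t‖ ^ 2 - R ^ 2)) :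
    ∀ t, 0 ≤ t → R ≤ ‖xi t - xj t‖ := by
  intro t ht
  have hd : ∀ s, HasDerivAt (fun s ↦ xi s - xj s) (deriv xi s - deriv xj s) s :=
    fun s ↦ (hdi s).hasDerivAt.sub (hdj s).hasDerivAt
  have hbarrier : ∀ s, 0 ≤ s → -(γ * (‖xi s - xj s‖ ^ 2 - R ^ 2)) ≤
      2 * inner ℝ (xi s - xj s) (deriv xi s - deriv xj s) := fun s hs ↦ by
    have hj := hcj s hs
    rw [← neg_sub, inner_neg_left] at hj
    rw [inner_sub_right]
    linear_combination hci s hs + hj + γ * (‖xi s - xj s‖ ^ 2 - R ^ 2) * hω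
  have hmargin := nonneg_of_neg_mul_le_deriv (fun s ↦ (hd s).norm_sq.sub_const (R ^ 2)) hbarrier
    (sub_nonneg.mpr h0) ht
  exact le_of_sq_le_sq (sub_nonneg.mp hmargin) (norm_nonneg _)

theorem decentralized_cbf_safety
    (xi xj : ℝ → EuclideanSpace ℝ (Fin 2))
    (hdi : Differentiable ℝ xi) (hdj : Differentiable ℝ xj)
    (R γ ωi ωj : ℝ) (hR : 0 ≤ R) (hγ : 0 ≤ γ)
    (hωi : 0 ≤ ωi) (hωj : 0 ≤ ωj) (hω : ωi + ωj = 1)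
    (h0 : ‖xi 0 - xj 0‖ ^ 2 ≥ R ^ 2)
    (hci : ∀ t, 0 ≤ t →
      -2 * (inner ℝ (xi t - xj t) (deriv xi t) : ℝ) ≤
        ωi * γ * (‖xi t - xj t‖ ^ 2 - R ^ 2))
    (hcj : ∀ t, 0 ≤ t →
      -2 * (inner ℝ (xj t - xi t) (deriv xj t) : ℝ) ≤
        ωj * γ * (‖xi t - xj t‖ ^ 2 - R ^ 2)) :
    ∀ t, 0 ≤ t → R ≤ ‖xi t - xj t‖ :=
  decentralized_cbf_safety_general xi xj hdi hdj R γ ωi ωj hω h0 hci hcj
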